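/- Let t₀ > 0, x₀ ∈ ℝ, and y₀ ∈ S(x₀,t₀), and suppose that either ρ₀({y₀}) = 0 or c(y₀;x₀,t₀) = u₀(y₀). For 0 < t < t₀ set x(t) = y₀ + c(y₀;x₀,t₀)·τ(1 − e^{−t/τ}) + m̃₀(y₀)·(τ² − τ²e^{−t/τ} − τt). Then for every t ∈ (0,t₀): y₀ ∈ S(x(t),t) and S(x(t),t) ⊆ S(x₀,t₀); moreover, if in addition y₀ = y_*(x₀,t₀) (and S(x(t),t) ∩ supp ρ₀ is nonempty), then y_*(x(t),t) = y_*(x₀,t₀). -/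

import Mathlib

open MeasureTheory Set Filter Topology

noncomputable def Mtot (ρ : Measure ℝ) : ℝ := (ρ Set.univ).toReal

noncomputable def m0 (ρ : Measure ℝ) (y : ℝ) : ℝ := (ρ (Set.Iio y)).toReal

noncomputable def m0p (ρ : Measure ℝ) (y : ℝ) : ℝ := (ρ (Set.Iic y)).toReal

/-- `m̃₀(y) = (1/2)(ρ((−∞,y)) + ρ((−∞,y]) − M)`. -/
noncomputable def mtilde (ρ : Measure ℝ) (y : ℝ) : ℝ :=
  (m0 ρ y + m0p ρ y - Mtot ρ) / 2

/-- topological support of the measure. -/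
def msupp (ρ : Measure ℝ) : Set ℝ := {x | ∀ U ∈ nhds x, 0 < ρ U}

/-- The generalized potential `F(y;x,t)`. -/
noncomputable def Fpot (ρ : Measure ℝ) (u₀ : ℝ → ℝ) (τ y x t : ℝ) : ℝ :=
  ∫ η in Set.Iio y,
    (η + u₀ η * (τ * (1 - Real.exp (-t / τ)))
       + mtilde ρ η * (τ ^ 2 - τ ^ 2 * Real.exp (-t / τ) - τ * t) - x) ∂ρ

/-- The right-limit value `F(y+;x,t)` (integral over `(−∞,y]`). -/
noncomputable def FpotP (ρ : Measure ℝ) (u₀ : ℝ → ℝ) (τ y x t : ℝ) : ℝ :=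
  ∫ η in Set.Iic y,
    (η + u₀ η * (τ * (1 - Real.exp (-t / τ)))
       + mtilde ρ η * (τ ^ 2 - τ ^ 2 * Real.exp (-t / τ) - τ * t) - x) ∂ρ

/-- `ν(x,t) = inf_y F(y;x,t)`. -/
noncomputable def nuEP (ρ : Measure ℝ) (u₀ : ℝ → ℝ) (τ x t : ℝ) : ℝ :=
  ⨅ y : ℝ, Fpot ρ u₀ τ y x t

/-- `S(x,t)`: points approachable by sequences along which `F` tends to `ν(x,t)`. -/
def Sset (ρ : Measure ℝ) (u₀ : ℝ → ℝ) (τ x t : ℝ) : Set ℝ :=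
  {y | ∃ yn : ℕ → ℝ, Tendsto yn atTop (𝓝 y) ∧
    Tendsto (fun n => Fpot ρ u₀ τ (yn n) x t) atTop (𝓝 (nuEP ρ u₀ τ x t))}

/-- `y_*(x,t) = inf (S(x,t) ∩ supp ρ₀)`. -/
noncomputable def ystar (ρ : Measure ℝ) (u₀ : ℝ → ℝ) (τ x t : ℝ) : ℝ :=
  sInf (Sset ρ u₀ τ x t ∩ msupp ρ)

/-- initial speed `c(y;x,t)` of the characteristic connecting `(y,0)` and `(x,t)`. -/
noncomputable def cspeed (ρ : Measure ℝ) (τ y x t : ℝ) : ℝ :=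
  (x - y) / (τ * (1 - Real.exp (-t / τ)))
    - mtilde ρ y * (τ - t / (1 - Real.exp (-t / τ)))

/-! ### Auxiliary lemmas -/

/-- The integrand of `Fpot`. -/
noncomputable def ig (ρ : Measure ℝ) (u₀ : ℝ → ℝ) (τ x t : ℝ) (η : ℝ) : ℝ :=
  η + u₀ η * (τ * (1 - Real.exp (-t / τ)))
    + mtilde ρ η * (τ ^ 2 - τ ^ 2 * Real.exp (-t / τ) - τ * t) - x

lemma Fpot_eq (ρ : Measure ℝ) (u₀ : ℝ → ℝ) (τ y x t : ℝ) :
    Fpot ρ u₀ τ y x t = ∫ η in Set.Iio y, ig ρ u₀ τ x t η ∂ρ := rfl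

section Aux

variable (ρ : Measure ℝ) [IsFiniteMeasure ρ]

lemma m0_mono : Monotone (m0 ρ) := fun a b hab =>
  ENNReal.toReal_mono (measure_ne_top ρ _) (measure_mono (Set.Iio_subset_Iio hab))

lemma m0p_mono : Monotone (m0p ρ) := fun a b hab =>
  ENNReal.toReal_mono (measure_ne_top ρ _) (measure_mono (Set.Iic_subset_Iic.2 hab))

lemma mtilde_mono : Monotone (mtilde ρ) := by
  intro a b hab
  have h1 := m0_mono ρ hab
  have h2 := m0p_mono ρ hab
  unfold mtilde; linarith

lemma mtilde_meas : Measurable (mtilde ρ) := by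
  have h1 : Measurable (m0 ρ) := (m0_mono ρ).measurable
  have h2 : Measurable (m0p ρ) := (m0p_mono ρ).measurable
  unfold mtilde
  exact ((h1.add h2).sub measurable_const).div_const 2

lemma abs_mtilde_le (y : ℝ) : |mtilde ρ y| ≤ Mtot ρ := by
  have h1 : 0 ≤ m0 ρ y := ENNReal.toReal_nonneg
  have h2 : 0 ≤ m0p ρ y := ENNReal.toReal_nonneg
  have h3 : m0 ρ y ≤ Mtot ρ :=
    ENNReal.toReal_mono (measure_ne_top ρ _) (measure_mono (Set.subset_univ _))
  have h4 : m0p ρ y ≤ Mtot ρ :=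
    ENNReal.toReal_mono (measure_ne_top ρ _) (measure_mono (Set.subset_univ _))
  have h5 : 0 ≤ Mtot ρ := ENNReal.toReal_nonneg
  rw [abs_le]; constructor <;> (unfold mtilde; nlinarith)

lemma integrable_mtilde : Integrable (mtilde ρ) ρ := by
  refine Integrable.mono' (integrable_const (Mtot ρ)) (mtilde_meas ρ).aestronglyMeasurable ?_
  filter_upwards with η
  simpa using abs_mtilde_le ρ η

variable {u₀ : ℝ → ℝ} {U₀ : ℝ}

lemma integrable_ig (hmom : Integrable (fun η : ℝ => η) ρ) (humeas : Measurable u₀)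
    (hu : ∀ᵐ η ∂ρ, |u₀ η| ≤ U₀) (τ x t : ℝ) :
    Integrable (ig ρ u₀ τ x t) ρ := by
  set a := τ * (1 - Real.exp (-t / τ))
  set b := τ ^ 2 - τ ^ 2 * Real.exp (-t / τ) - τ * t
  have h1 : Integrable (fun η => u₀ η * a) ρ := by
    refine Integrable.mono' (integrable_const (|U₀| * |a|))
      ((humeas.mul measurable_const).aestronglyMeasurable) ?_
    filter_upwards [hu] with η hη
    rw [Real.norm_eq_abs, abs_mul]
    have : |u₀ η| ≤ |U₀| := le_trans hη (le_abs_self _)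
    exact mul_le_mul_of_nonneg_right this (abs_nonneg _)
  have h2 : Integrable (fun η => mtilde ρ η * b) ρ := (integrable_mtilde ρ).mul_const b
  exact ((hmom.add h1).add h2).sub (integrable_const x)

lemma measurable_ig (humeas : Measurable u₀) (τ x t : ℝ) :
    Measurable (ig ρ u₀ τ x t) := by
  unfold ig
  exact ((measurable_id.add (humeas.mul measurable_const)).add
    ((mtilde_meas ρ).mul measurable_const)).sub measurable_const

/-- Splitting the integral over `Iio y₂` into `Iio y₁` and `Ico y₁ y₂`. -/
lemma setInt_Iio_split {ψ : ℝ → ℝ} (hψ : Integrable ψ ρ) {y₁ y₂ : ℝ} (h : y₁ ≤ y₂) :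
    ∫ η in Set.Iio y₂, ψ η ∂ρ
      = (∫ η in Set.Iio y₁, ψ η ∂ρ) + ∫ η in Set.Ico y₁ y₂, ψ η ∂ρ := by
  rw [← Set.Iio_union_Ico_eq_Iio h]
  exact setIntegral_union (by
      rw [Set.disjoint_left]; rintro x hx ⟨hx1, hx2⟩; exact absurd hx1 (not_le.2 hx))
    measurableSet_Ico hψ.integrableOn hψ.integrableOn

lemma bddBelow_range_Fpot {τ x t : ℝ} (hint : Integrable (ig ρ u₀ τ x t) ρ) :
    BddBelow (Set.range fun y => Fpot ρ u₀ τ y x t) := by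
  refine ⟨-(∫ η, |ig ρ u₀ τ x t η| ∂ρ), ?_⟩
  rintro _ ⟨y, rfl⟩
  show -(∫ η, |ig ρ u₀ τ x t η| ∂ρ) ≤ Fpot ρ u₀ τ y x t
  rw [Fpot_eq]
  have h1 : ‖∫ η in Set.Iio y, ig ρ u₀ τ x t η ∂ρ‖
      ≤ ∫ η in Set.Iio y, ‖ig ρ u₀ τ x t η‖ ∂ρ := norm_integral_le_integral_norm _
  have h2 : ∫ η in Set.Iio y, ‖ig ρ u₀ τ x t η‖ ∂ρ ≤ ∫ η, ‖ig ρ u₀ τ x t η‖ ∂ρ :=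
    setIntegral_le_integral hint.norm (by filter_upwards with η using norm_nonneg _)
  simp only [Real.norm_eq_abs] at h1 h2
  have := neg_abs_le (∫ η in Set.Iio y, ig ρ u₀ τ x t η ∂ρ)
  linarith

lemma nuEP_le {τ x t : ℝ} (hint : Integrable (ig ρ u₀ τ x t) ρ) (y : ℝ) :
    nuEP ρ u₀ τ x t ≤ Fpot ρ u₀ τ y x t :=
  ciInf_le (bddBelow_range_Fpot ρ hint) y

/-- Dominated-convergence continuity of `y ↦ ∫_{Iio y} ψ` at a point where `ψ` vanishes. -/
lemma tendsto_setInt_Iio {ψ : ℝ → ℝ} (hψm : Measurable ψ) (hψ : Integrable ψ ρ)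
    {y : ℝ} (hzero : ψ y = 0) {yn : ℕ → ℝ} (hyn : Tendsto yn atTop (𝓝 y)) :
    Tendsto (fun n => ∫ η in Set.Iio (yn n), ψ η ∂ρ) atTop
      (𝓝 (∫ η in Set.Iio y, ψ η ∂ρ)) := by
  have key : ∀ z : ℝ, ∫ η in Set.Iio z, ψ η ∂ρ = ∫ η, (Set.Iio z).indicator ψ η ∂ρ :=
    fun z => (integral_indicator measurableSet_Iio).symm
  simp only [key]
  refine tendsto_integral_of_dominated_convergence (fun η => |ψ η|)
    (fun n => (hψm.indicator measurableSet_Iio).aestronglyMeasurable) hψ.abs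
    (fun n => by filter_upwards with η; simpa using norm_indicator_le_norm_self ψ η) ?_
  filter_upwards with η
  rcases lt_trichotomy η y with hη | hη | hη
  · have hev : ∀ᶠ n in atTop, (Set.Iio (yn n)).indicator ψ η = (Set.Iio y).indicator ψ η := by
      filter_upwards [hyn.eventually_const_lt hη] with n hn
      rw [Set.indicator_of_mem (show η ∈ Set.Iio (yn n) from hn) ψ, Set.indicator_of_mem (show η ∈ Set.Iio y from hη) ψ]
    exact Tendsto.congr' (hev.mono fun n hn => hn.symm) tendsto_const_nhds
  · subst hη
    have : ∀ n, (Set.Iio (yn n)).indicator ψ η = (Set.Iio η).indicator ψ η := by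
      intro n
      by_cases h : η ∈ Set.Iio (yn n)
      · rw [Set.indicator_of_mem h ψ, hzero,
          Set.indicator_of_notMem (show η ∉ Set.Iio η from lt_irrefl η) ψ]
      · rw [Set.indicator_of_notMem h ψ,
          Set.indicator_of_notMem (show η ∉ Set.Iio η from lt_irrefl η) ψ]
    simp only [this]; exact tendsto_const_nhds
  · have hev : ∀ᶠ n in atTop, (Set.Iio (yn n)).indicator ψ η = (Set.Iio y).indicator ψ η := by
      filter_upwards [hyn.eventually_lt_const hη] with n hn
      rw [Set.indicator_of_notMem (show η ∉ Set.Iio (yn n) by simpa using hn.le) ψ,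
        Set.indicator_of_notMem (show η ∉ Set.Iio y by simpa using hη.le) ψ]
    exact Tendsto.congr' (hev.mono fun n hn => hn.symm) tendsto_const_nhds

lemma msupp_closed : IsClosed (msupp ρ) := by
  rw [← closure_subset_iff_isClosed]
  intro x hx U hU
  obtain ⟨y, hyU, hyM⟩ := mem_closure_iff.1 hx (interior U) isOpen_interior
    (mem_interior_iff_mem_nhds.2 hU)
  have : 0 < ρ (interior U) := hyM (interior U) (isOpen_interior.mem_nhds hyU)
  exact lt_of_lt_of_le this (measure_mono interior_subset)

end Aux

lemma bddBelow_Sset_inter_msupp (ρ : Measure ℝ) [IsFiniteMeasure ρ] {u₀ : ℝ → ℝ} {U₀ : ℝ}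
    (hmom : Integrable (fun η : ℝ => η) ρ) (humeas : Measurable u₀)
    (hu : ∀ᵐ η ∂ρ, |u₀ η| ≤ U₀) (τ x t : ℝ) :
    BddBelow (Sset ρ u₀ τ x t ∩ msupp ρ) := by
  set C : ℝ := |U₀| * |τ * (1 - Real.exp (-t / τ))|
      + Mtot ρ * |τ ^ 2 - τ ^ 2 * Real.exp (-t / τ) - τ * t| + |x| with hC_def
  have hint : Integrable (ig ρ u₀ τ x t) ρ := integrable_ig ρ hmom humeas hu τ x t
  have hmul : ∀ p q P : ℝ, |p| ≤ P → p * q ≤ P * |q| := by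
    intro p q P hp
    calc p * q ≤ |p * q| := le_abs_self _
      _ = |p| * |q| := abs_mul _ _
      _ ≤ P * |q| := mul_le_mul_of_nonneg_right hp (abs_nonneg _)
  have hbound : ∀ᵐ η ∂ρ, ig ρ u₀ τ x t η ≤ η + C := by
    filter_upwards [hu] with η hη
    have h1 := hmul (u₀ η) (τ * (1 - Real.exp (-t / τ))) |U₀| (hη.trans (le_abs_self _))
    have h2 := hmul (mtilde ρ η) (τ ^ 2 - τ ^ 2 * Real.exp (-t / τ) - τ * t) (Mtot ρ)
      (abs_mtilde_le ρ η)
    have h3 : -x ≤ |x| := neg_le_abs x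
    rw [hC_def]; unfold ig; linarith
  by_contra hbb
  rw [not_bddBelow_iff] at hbb
  obtain ⟨z₁, ⟨hz₁S, _⟩, hz₁lt⟩ := hbb (-C - 2)
  obtain ⟨z₂, ⟨_, hz₂supp⟩, hz₂lt⟩ := hbb z₁
  obtain ⟨z₃, ⟨hz₃S, _⟩, hz₃lt⟩ := hbb z₂
  have key : ∀ y y' : ℝ, y ≤ y' → y' ≤ z₁ + 1 →
      (ρ (Set.Ico y y')).toReal ≤ Fpot ρ u₀ τ y x t - Fpot ρ u₀ τ y' x t := by
    intro y y' hyy hy'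
    have hb2 : ∫ η in Set.Ico y y', ig ρ u₀ τ x t η ∂ρ
        ≤ ∫ η in Set.Ico y y', (-1 : ℝ) ∂ρ := by
      refine setIntegral_mono_ae_restrict hint.integrableOn
        (integrableOn_const (measure_ne_top _ _)) ?_
      filter_upwards [ae_restrict_of_ae hbound, ae_restrict_mem measurableSet_Ico]
        with η hη hmem
      have h3 : η < y' := hmem.2
      linarith
    have hconst : ∫ η in Set.Ico y y', (-1 : ℝ) ∂ρ = -(ρ (Set.Ico y y')).toReal := by
      rw [setIntegral_const]; simp [Measure.real]
    have hsplit := setInt_Iio_split ρ hint hyy (y₂ := y')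
    rw [Fpot_eq, Fpot_eq, hsplit]
    rw [hconst] at hb2
    linarith
  obtain ⟨y1, hy1t, hy1F⟩ := hz₁S
  obtain ⟨y3, hy3t, hy3F⟩ := hz₃S
  set s : ℝ := min (z₂ - z₃) (z₁ - z₂) / 2 with hs_def
  have hmin1 := min_le_left (z₂ - z₃) (z₁ - z₂)
  have hmin2 := min_le_right (z₂ - z₃) (z₁ - z₂)
  have hs0 : 0 < s := by
    rw [hs_def]
    have h1 : 0 < z₂ - z₃ := by linarith
    have h2 : 0 < z₁ - z₂ := by linarith
    exact div_pos (lt_min h1 h2) two_pos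
  have h₃s : z₃ < z₂ - s := by rw [hs_def]; rw [hs_def] at hs0; linarith
  have h₁s : z₂ + s < z₁ := by rw [hs_def]; rw [hs_def] at hs0; linarith
  have hev : ∀ᶠ n in atTop, (ρ (Set.Ioo (z₂ - s) (z₂ + s))).toReal
      ≤ Fpot ρ u₀ τ (y3 n) x t - Fpot ρ u₀ τ (y1 n) x t := by
    filter_upwards [hy3t.eventually_lt_const h₃s,
      hy1t.eventually_const_lt h₁s,
      hy1t.eventually_lt_const (show z₁ < z₁ + 1 by linarith)]
      with n h3 h1a h1b
    have ho1 : y3 n ≤ z₂ := by linarith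
    have ho2 : z₂ ≤ y1 n := by linarith
    have k1 := key (y3 n) z₂ ho1 (by linarith)
    have k2 := key z₂ (y1 n) ho2 (by linarith)
    have hsub : Set.Ioo (z₂ - s) (z₂ + s) ⊆ Set.Ico (y3 n) (y1 n) := by
      rintro w ⟨hw1, hw2⟩; exact ⟨by linarith, by linarith⟩
    have hm : ρ (Set.Ioo (z₂ - s) (z₂ + s))
        ≤ ρ (Set.Ico (y3 n) z₂) + ρ (Set.Ico z₂ (y1 n)) := by
      refine le_trans (measure_mono hsub) ?_
      rw [← Set.Ico_union_Ico_eq_Ico ho1 ho2]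
      exact measure_union_le _ _
    have hm' : (ρ (Set.Ioo (z₂ - s) (z₂ + s))).toReal
        ≤ (ρ (Set.Ico (y3 n) z₂)).toReal + (ρ (Set.Ico z₂ (y1 n))).toReal := by
      have h := ENNReal.toReal_mono
        (ENNReal.add_ne_top.2 ⟨measure_ne_top ρ _, measure_ne_top ρ _⟩) hm
      rwa [ENNReal.toReal_add (measure_ne_top ρ _) (measure_ne_top ρ _)] at h
    linarith
  have hlim : Tendsto (fun n => Fpot ρ u₀ τ (y3 n) x t - Fpot ρ u₀ τ (y1 n) x t)
      atTop (𝓝 0) := by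
    have h := hy3F.sub hy1F; rwa [sub_self] at h
  have hle0 : (ρ (Set.Ioo (z₂ - s) (z₂ + s))).toReal ≤ 0 := ge_of_tendsto hlim hev
  have h0 : ρ (Set.Ioo (z₂ - s) (z₂ + s)) = 0 := by
    have h00 : (ρ (Set.Ioo (z₂ - s) (z₂ + s))).toReal = 0 :=
      le_antisymm hle0 ENNReal.toReal_nonneg
    rcases (ENNReal.toReal_eq_zero_iff _).1 h00 with h | h
    · exact h
    · exact absurd h (measure_ne_top ρ _)
  have hpos := hz₂supp (Set.Ioo (z₂ - s) (z₂ + s))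
    (Ioo_mem_nhds (by linarith) (by linarith))
  rw [h0] at hpos; exact lt_irrefl 0 hpos

set_option maxHeartbeats 1000000 in
theorem stmt7 (ρ : Measure ℝ) [IsFiniteMeasure ρ] (u₀ : ℝ → ℝ) (U₀ τ : ℝ)
    (hτ : 0 < τ)
    (hmom : Integrable (fun η : ℝ => η) ρ) (humeas : Measurable u₀)
    (hu : ∀ᵐ η ∂ρ, |u₀ η| ≤ U₀)
    (x₀ t₀ y₀ : ℝ) (ht₀ : 0 < t₀) (hy₀ : y₀ ∈ Sset ρ u₀ τ x₀ t₀)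
    (hcase : ρ {y₀} = 0 ∨ cspeed ρ τ y₀ x₀ t₀ = u₀ y₀)
    (xc : ℝ → ℝ)
    (hxc : ∀ s : ℝ, xc s = y₀ + cspeed ρ τ y₀ x₀ t₀ * (τ * (1 - Real.exp (-s / τ)))
        + mtilde ρ y₀ * (τ ^ 2 - τ ^ 2 * Real.exp (-s / τ) - τ * s)) :
    ∀ t : ℝ, 0 < t → t < t₀ →
      y₀ ∈ Sset ρ u₀ τ (xc t) t ∧
      Sset ρ u₀ τ (xc t) t ⊆ Sset ρ u₀ τ x₀ t₀ ∧
      (y₀ = ystar ρ u₀ τ x₀ t₀ → (Sset ρ u₀ τ (xc t) t ∩ msupp ρ).Nonempty →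
        ystar ρ u₀ τ (xc t) t = ystar ρ u₀ τ x₀ t₀) := by
  intro t ht htlt
  -- basic exponential facts
  have hE1 : Real.exp (-t / τ) < 1 :=
    Real.exp_lt_one_iff.2 (div_neg_of_neg_of_pos (by linarith) hτ)
  have hE₀1 : Real.exp (-t₀ / τ) < 1 :=
    Real.exp_lt_one_iff.2 (div_neg_of_neg_of_pos (by linarith) hτ)
  have hE₀E : Real.exp (-t₀ / τ) < Real.exp (-t / τ) := by
    apply Real.exp_lt_exp.2
    apply div_lt_div_of_pos_right ?_ hτ
    linarith
  have ha : 0 < τ * (1 - Real.exp (-t / τ)) := by nlinarith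
  have ha₀ : 0 < τ * (1 - Real.exp (-t₀ / τ)) := by nlinarith
  set l : ℝ := (τ * (1 - Real.exp (-t / τ))) / (τ * (1 - Real.exp (-t₀ / τ))) with hl_def
  have hl0 : 0 < l := div_pos ha ha₀
  have hl1 : l ≤ 1 := by
    rw [hl_def]
    rw [div_le_one ha₀]
    nlinarith
  set β : ℝ := (τ ^ 2 - τ ^ 2 * Real.exp (-t / τ) - τ * t)
      - l * (τ ^ 2 - τ ^ 2 * Real.exp (-t₀ / τ) - τ * t₀) with hβ_def
  -- concavity fact and nonnegativity of β
  have hθ1 : t / t₀ ≤ 1 := (div_le_one ht₀).2 htlt.le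
  have hθ0 : 0 ≤ t / t₀ := by positivity
  have hcx := convexOn_exp.2 (Set.mem_univ (0 : ℝ)) (Set.mem_univ (-t₀ / τ))
    (by linarith : (0:ℝ) ≤ 1 - t / t₀) hθ0 (by ring)
  have harg : (1 - t / t₀) • (0:ℝ) + (t / t₀) • (-t₀ / τ) = -t / τ := by
    simp only [smul_eq_mul]
    field_simp [ht₀.ne', hτ.ne']
    ring
  rw [harg] at hcx
  simp only [smul_eq_mul, Real.exp_zero, mul_one] at hcx
  have hconc : t * (1 - Real.exp (-t₀ / τ)) ≤ t₀ * (1 - Real.exp (-t / τ)) := by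
    have h := mul_le_mul_of_nonneg_left hcx ht₀.le
    have h3 : t₀ * (1 - t / t₀ + t / t₀ * Real.exp (-t₀ / τ))
        = t₀ - t + t * Real.exp (-t₀ / τ) := by field_simp
    rw [h3] at h
    linarith
  have hβ0 : 0 ≤ β := by
    have hβeq : β = τ * (t₀ * (τ * (1 - Real.exp (-t / τ)))
        - t * (τ * (1 - Real.exp (-t₀ / τ)))) / (τ * (1 - Real.exp (-t₀ / τ))) := by
      rw [hβ_def, hl_def]
      have h0' : 1 - Real.exp (-(t₀ / τ)) ≠ 0 := by
        rw [← neg_div]; intro h; rw [h] at ha₀; simp at ha₀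
      field_simp [hτ.ne', ha₀.ne', h0']
      ring
    rw [hβeq]
    apply div_nonneg _ ha₀.le
    have h1 : 0 ≤ t₀ * (τ * (1 - Real.exp (-t / τ))) - t * (τ * (1 - Real.exp (-t₀ / τ))) := by
      nlinarith
    exact mul_nonneg hτ.le h1
  -- the comparison function φ and its primitive G
  set φ : ℝ → ℝ := fun η => (1 - l) * (η - y₀) + β * (mtilde ρ η - mtilde ρ y₀) with hφ_def
  have hφmeas : Measurable φ := by
    rw [hφ_def]
    exact (measurable_const.mul (measurable_id.sub measurable_const)).add
      (measurable_const.mul ((mtilde_meas ρ).sub measurable_const))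
  have hφint : Integrable φ ρ := by
    rw [hφ_def]
    exact (((hmom.sub (integrable_const y₀)).const_mul (1 - l))).add
      (((integrable_mtilde ρ).sub (integrable_const _)).const_mul β)
  have hφy₀ : φ y₀ = 0 := by rw [hφ_def]; simp
  have hφpos : ∀ η, y₀ ≤ η → 0 ≤ φ η := by
    intro η hη
    have hm := mtilde_mono ρ hη
    have h1 : 0 ≤ mtilde ρ η - mtilde ρ y₀ := by linarith
    have h2 : 0 ≤ (1 - l) * (η - y₀) := mul_nonneg (by linarith) (by linarith)
    have h3 : 0 ≤ β * (mtilde ρ η - mtilde ρ y₀) := mul_nonneg hβ0 h1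
    show 0 ≤ (1 - l) * (η - y₀) + β * (mtilde ρ η - mtilde ρ y₀)
    linarith
  have hφneg : ∀ η, η ≤ y₀ → φ η ≤ 0 := by
    intro η hη
    have hm := mtilde_mono ρ hη
    have h1 : mtilde ρ η - mtilde ρ y₀ ≤ 0 := by linarith
    have h2 : (1 - l) * (η - y₀) ≤ 0 :=
      mul_nonpos_of_nonneg_of_nonpos (by linarith) (by linarith)
    have h3 : β * (mtilde ρ η - mtilde ρ y₀) ≤ 0 := mul_nonpos_of_nonneg_of_nonpos hβ0 h1
    show (1 - l) * (η - y₀) + β * (mtilde ρ η - mtilde ρ y₀) ≤ 0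
    linarith
  set G : ℝ → ℝ := fun y => ∫ η in Set.Iio y, φ η ∂ρ with hG_def
  -- integrability of both integrands
  have hig₀ : Integrable (ig ρ u₀ τ x₀ t₀) ρ := integrable_ig ρ hmom humeas hu τ x₀ t₀
  have higt : Integrable (ig ρ u₀ τ (xc t) t) ρ := integrable_ig ρ hmom humeas hu τ (xc t) t
  -- the key pointwise identity
  have hpt : ∀ η, ig ρ u₀ τ (xc t) t η = l * ig ρ u₀ τ x₀ t₀ η + φ η := by
    intro η
    have h0 : 1 - Real.exp (-t₀ / τ) ≠ 0 := by nlinarith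
    rw [hxc t]
    simp only [hφ_def, hβ_def, hl_def, ig, cspeed]
    have h0' : 1 - Real.exp (-(t₀ / τ)) ≠ 0 := by rw [← neg_div]; exact h0
    field_simp [hτ.ne', h0, h0']
    ring
  -- decomposition of the potential
  have hFt : ∀ y, Fpot ρ u₀ τ y (xc t) t = l * Fpot ρ u₀ τ y x₀ t₀ + G y := by
    intro y
    rw [Fpot_eq, Fpot_eq, hG_def]
    simp only [hpt]
    rw [integral_add ((hig₀.restrict).const_mul l) (hφint.restrict), integral_const_mul]
  -- G is minimized at y₀
  have hGmin : ∀ y, G y₀ ≤ G y := by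
    intro y
    rcases le_total y₀ y with h | h
    · have hsplit := setInt_Iio_split ρ hφint h
      have h2 : (0:ℝ) ≤ ∫ η in Set.Ico y₀ y, φ η ∂ρ :=
        setIntegral_nonneg measurableSet_Ico (fun η hη => hφpos η hη.1)
      simp only [hG_def]
      rw [hsplit]; linarith
    · have hsplit := setInt_Iio_split ρ hφint h
      have h2 : (∫ η in Set.Ico y y₀, φ η ∂ρ) ≤ 0 :=
        setIntegral_nonpos measurableSet_Ico (fun η hη => hφneg η hη.2.le)
      simp only [hG_def]
      rw [hsplit]; linarith
  obtain ⟨yn, hyn, hFyn⟩ := hy₀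
  have hGcont : Tendsto (fun n => G (yn n)) atTop (𝓝 (G y₀)) := by
    simp only [hG_def]
    exact tendsto_setInt_Iio ρ hφmeas hφint hφy₀ hyn
  have hFtlim : Tendsto (fun n => Fpot ρ u₀ τ (yn n) (xc t) t) atTop
      (𝓝 (l * nuEP ρ u₀ τ x₀ t₀ + G y₀)) := by
    simp only [hFt]
    exact (hFyn.const_mul l).add hGcont
  have hFtlb : ∀ y, l * nuEP ρ u₀ τ x₀ t₀ + G y₀ ≤ Fpot ρ u₀ τ y (xc t) t := by
    intro y
    rw [hFt y]
    have h1 := nuEP_le ρ hig₀ y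
    have h2 := hGmin y
    nlinarith
  have hνt : nuEP ρ u₀ τ (xc t) t = l * nuEP ρ u₀ τ x₀ t₀ + G y₀ := by
    refine le_antisymm ?_ (le_ciInf hFtlb)
    exact ge_of_tendsto hFtlim (Filter.Eventually.of_forall fun n => nuEP_le ρ higt (yn n))
  have part1 : y₀ ∈ Sset ρ u₀ τ (xc t) t := ⟨yn, hyn, by rw [hνt]; exact hFtlim⟩
  have part2 : Sset ρ u₀ τ (xc t) t ⊆ Sset ρ u₀ τ x₀ t₀ := by
    rintro z ⟨zn, hzn, hFzn⟩
    rw [hνt] at hFzn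
    have hup : Tendsto (fun n => Fpot ρ u₀ τ (zn n) (xc t) t - l * nuEP ρ u₀ τ x₀ t₀)
        atTop (𝓝 (G y₀)) := by
      have h := hFzn.sub (tendsto_const_nhds (x := l * nuEP ρ u₀ τ x₀ t₀))
      simpa using h
    have hGz : Tendsto (fun n => G (zn n)) atTop (𝓝 (G y₀)) := by
      refine tendsto_of_tendsto_of_tendsto_of_le_of_le tendsto_const_nhds hup
        (fun n => hGmin (zn n)) (fun n => ?_)
      have h1 := hFt (zn n)
      have h2 := nuEP_le ρ hig₀ (zn n)
      nlinarith
    have hlF : Tendsto (fun n => l * Fpot ρ u₀ τ (zn n) x₀ t₀) atTop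
        (𝓝 (l * nuEP ρ u₀ τ x₀ t₀)) := by
      have h := hFzn.sub hGz
      have heq : (fun n => Fpot ρ u₀ τ (zn n) (xc t) t - G (zn n))
          = fun n => l * Fpot ρ u₀ τ (zn n) x₀ t₀ := by
        funext n; rw [hFt (zn n)]; ring
      rw [heq] at h
      simpa using h
    refine ⟨zn, hzn, ?_⟩
    have h := hlF.const_mul l⁻¹
    simpa only [← mul_assoc, inv_mul_cancel₀ hl0.ne', one_mul] using h
  refine ⟨part1, part2, ?_⟩
  intro hyst hne
  have hbdd : BddBelow (Sset ρ u₀ τ x₀ t₀ ∩ msupp ρ) :=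
    bddBelow_Sset_inter_msupp ρ hmom humeas hu τ x₀ t₀
  have hsub : Sset ρ u₀ τ (xc t) t ∩ msupp ρ ⊆ Sset ρ u₀ τ x₀ t₀ ∩ msupp ρ :=
    fun w hw => ⟨part2 hw.1, hw.2⟩
  obtain ⟨w, hw⟩ := hne
  have hne₀ : (Sset ρ u₀ τ x₀ t₀ ∩ msupp ρ).Nonempty := ⟨w, hsub hw⟩
  have h1 : ystar ρ u₀ τ x₀ t₀ ≤ ystar ρ u₀ τ (xc t) t :=
    csInf_le_csInf hbdd ⟨w, hw⟩ hsub
  have hy₀supp : y₀ ∈ msupp ρ := by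
    have h2 := csInf_mem_closure hne₀ hbdd
    have h3 : y₀ ∈ closure (Sset ρ u₀ τ x₀ t₀ ∩ msupp ρ) := by rw [hyst]; exact h2
    exact (msupp_closed ρ).closure_subset (closure_mono Set.inter_subset_right h3)
  have h3 : ystar ρ u₀ τ (xc t) t ≤ y₀ :=
    csInf_le (hbdd.mono hsub) ⟨part1, hy₀supp⟩
  rw [← hyst] at h1 ⊢
  exact le_antisymm h3 h1
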